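/- Let k ≥ 2 and τ(λ) := H_{k−1}(λ)⊗I_n, where H_{k−1}(λ) is the (k−1)×k pencil with −1 on the main diagonal and λ on the superdiagonal. Then the smallest singular values of the convolution matrices C_{k−2}(τ) and C_{k−1}(τ) satisfy σ_min(C_{k−2}(τ)) = σ_min(C_{k−1}(τ)) = 2 sin(π/(4k−2)) ≥ 3/(2k). -/

import Mathlib

noncomputable section

open Polynomial Matrix

namespace GLin

variable {F : Type*} [RCLike F]

/-! ### Matrix polynomials and pencils -/

/-- The matrix polynomial `P(λ) = ∑_{i=0}^k λ^i A_i` determined by its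
coefficient matrices `A_0, …, A_k` (grade `k`). -/
def matPoly {k m n : ℕ} (A : Fin (k + 1) → Matrix (Fin m) (Fin n) F) :
    Matrix (Fin m) (Fin n) F[X] :=
  Matrix.of fun r c => ∑ i : Fin (k + 1), Polynomial.C (A i r c) * Polynomial.X ^ (i : ℕ)

/-- The matrix pencil `L(λ) = λ X + Y`. -/
def pencil {ρ γ : Type*} (Xc Yc : Matrix ρ γ F) : Matrix ρ γ F[X] :=
  Matrix.of fun i j => Polynomial.C (Xc i j) * Polynomial.X + Polynomial.C (Yc i j)

/-- `Λ_k(λ) ⊗ I_n` where `Λ_k(λ) = (λ^{k-1}, …, λ, 1)ᵀ`. -/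
def Lam (F : Type*) [RCLike F] (k n : ℕ) : Matrix (Fin k × Fin n) (Fin n) F[X] :=
  Matrix.of fun p c => if p.2 = c then Polynomial.X ^ (k - 1 - (p.1 : ℕ)) else 0

/-- `Λ_k(λ)ᵀ ⊗ I_m`. -/
def LamRow (F : Type*) [RCLike F] (k m : ℕ) : Matrix (Fin m) (Fin k × Fin m) F[X] :=
  Matrix.of fun r p => if r = p.2 then Polynomial.X ^ (k - 1 - (p.1 : ℕ)) else 0

/-- `v ⊗ P(λ)`. -/
def vkron {k m n : ℕ} (v : Fin k → F) (P : Matrix (Fin m) (Fin n) F[X]) :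
    Matrix (Fin k × Fin m) (Fin n) F[X] :=
  Matrix.of fun p c => Polynomial.C (v p.1) * P p.2 c

/-- `wᵀ ⊗ P(λ)`. -/
def wkron {k m n : ℕ} (w : Fin k → F) (P : Matrix (Fin m) (Fin n) F[X]) :
    Matrix (Fin m) (Fin k × Fin n) F[X] :=
  Matrix.of fun r q => Polynomial.C (w q.1) * P r q.2

/-- The defining identity of `𝕃₁(P)`: `L(λ)(Λ_k(λ) ⊗ I_n) = v ⊗ P(λ)`. -/
def RightAnsatz {k m n : ℕ} (P : Matrix (Fin m) (Fin n) F[X])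
    (L : Matrix (Fin k × Fin m) (Fin k × Fin n) F[X]) (v : Fin k → F) : Prop :=
  L * Lam F k n = vkron v P

/-- The defining identity of `𝕃₂(P)`: `(Λ_k(λ)ᵀ ⊗ I_m) L(λ) = wᵀ ⊗ P(λ)`. -/
def LeftAnsatz {k m n : ℕ} (P : Matrix (Fin m) (Fin n) F[X])
    (L : Matrix (Fin k × Fin m) (Fin k × Fin n) F[X]) (w : Fin k → F) : Prop :=
  LamRow F k m * L = wkron w P

/-- The vector `α e₁ ∈ F^k`. -/
def e1 {k : ℕ} (α : F) : Fin k → F := fun i => if (i : ℕ) = 0 then α else 0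

/-- `M ⊗ I_m`. -/
def kronId {k m : ℕ} (M : Matrix (Fin k) (Fin k) F) :
    Matrix (Fin k × Fin m) (Fin k × Fin m) F :=
  Matrix.of fun p q => if p.2 = q.2 then M p.1 q.1 else 0

/-! ### (strong) g-linearizations -/

/-- `diag(P(λ), I_{k-1} ⊗ I_{m,n})`. -/
def glinTarget {k m n : ℕ} (P : Matrix (Fin m) (Fin n) F[X]) :
    Matrix (Fin k × Fin m) (Fin k × Fin n) F[X] :=
  Matrix.of fun p q =>
    if p.1 = q.1 then
      (if (p.1 : ℕ) = 0 then P p.2 q.2 else if (p.2 : ℕ) = (q.2 : ℕ) then 1 else 0)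
    else 0

/-- A `km × kn` pencil (or matrix polynomial) `L` is a g-linearization of the `m × n`
matrix polynomial `P` of grade `k` if `E(λ) L(λ) G(λ) = diag(P(λ), I_{k-1} ⊗ I_{m,n})`
for unimodular `E`, `G`. -/
def IsGLin {k m n : ℕ} (P : Matrix (Fin m) (Fin n) F[X])
    (L : Matrix (Fin k × Fin m) (Fin k × Fin n) F[X]) : Prop :=
  ∃ (E : Matrix (Fin k × Fin m) (Fin k × Fin m) F[X])
    (G : Matrix (Fin k × Fin n) (Fin k × Fin n) F[X]),
      IsUnit E.det ∧ IsUnit G.det ∧ E * L * G = glinTarget P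

/-- grade-`N` reversal `rev_N P(λ) = λ^N P(1/λ)`, entrywise. -/
def revMat {ρ γ : Type*} (N : ℕ) (P : Matrix ρ γ F[X]) : Matrix ρ γ F[X] :=
  P.map fun p => Polynomial.reflect N p

/-- Strong g-linearization of the grade-`k` matrix polynomial with coefficients `A`. -/
def IsStrongGLin {k m n : ℕ} (A : Fin (k + 1) → Matrix (Fin m) (Fin n) F)
    (L : Matrix (Fin k × Fin m) (Fin k × Fin n) F[X]) : Prop :=
  IsGLin (matPoly A) L ∧ IsGLin (revMat k (matPoly A)) (revMat 1 L)

/-! ### linearizations (rectangular, of size `(m+s) × (n+s)`) -/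

/-- A matrix polynomial `L` (indexed by arbitrary finite types of cardinalities
`m + s` and `n + s`) is a linearization of `P` if, after identifying the index types
with `Fin m ⊕ Fin s` and `Fin n ⊕ Fin s`, one has `E(λ) L(λ) G(λ) = diag(P(λ), I_s)`
for unimodular `E`, `G`. -/
def IsLin {m n : ℕ} (s : ℕ) (P : Matrix (Fin m) (Fin n) F[X])
    {ρ γ : Type*} [Fintype ρ] [DecidableEq ρ] [Fintype γ] [DecidableEq γ]
    (L : Matrix ρ γ F[X]) : Prop :=
  ∃ (er : ρ ≃ (Fin m ⊕ Fin s)) (ec : γ ≃ (Fin n ⊕ Fin s))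
    (E : Matrix (Fin m ⊕ Fin s) (Fin m ⊕ Fin s) F[X])
    (G : Matrix (Fin n ⊕ Fin s) (Fin n ⊕ Fin s) F[X]),
      IsUnit E.det ∧ IsUnit G.det ∧
        E * Matrix.reindex er ec L * G = Matrix.fromBlocks P 0 0 1

/-- Strong linearization of the grade-`k` matrix polynomial with coefficients `A`. -/
def IsStrongLin {k m n : ℕ} (s : ℕ) (A : Fin (k + 1) → Matrix (Fin m) (Fin n) F)
    {ρ γ : Type*} [Fintype ρ] [DecidableEq ρ] [Fintype γ] [DecidableEq γ]
    (L : Matrix ρ γ F[X]) : Prop :=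
  IsLin s (matPoly A) L ∧ IsLin s (revMat k (matPoly A)) (revMat 1 L)

/-! ### shifted sums -/

/-- Column shifted sum `X ⊞→ Y`. -/
def colShiftSum {k m n : ℕ} (Xc Yc : Matrix (Fin k × Fin m) (Fin k × Fin n) F) :
    Matrix (Fin k × Fin m) (Fin (k + 1) × Fin n) F :=
  Matrix.of fun p q =>
    (if h : (q.1 : ℕ) < k then Xc p (⟨(q.1 : ℕ), h⟩, q.2) else 0) +
    (if h : 0 < (q.1 : ℕ) then
        Yc p (⟨(q.1 : ℕ) - 1, by have := q.1.isLt; omega⟩, q.2)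
      else 0)

/-- Row shifted sum `X ⊞↓ Y`. -/
def rowShiftSum {k m n : ℕ} (Xc Yc : Matrix (Fin k × Fin m) (Fin k × Fin n) F) :
    Matrix (Fin (k + 1) × Fin m) (Fin k × Fin n) F :=
  Matrix.of fun p q =>
    (if h : (p.1 : ℕ) < k then Xc (⟨(p.1 : ℕ), h⟩, p.2) q else 0) +
    (if h : 0 < (p.1 : ℕ) then
        Yc (⟨(p.1 : ℕ) - 1, by have := p.1.isLt; omega⟩, p.2) q
      else 0)

/-! ### the parametrization of `𝕃₁(P)` and `𝕃₂(P)` -/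

/-- `X = [v ⊗ A_k ∣ -W]`. -/
def L1X {k m n : ℕ} (A : Fin (k + 1) → Matrix (Fin m) (Fin n) F) (v : Fin k → F)
    (W : Matrix (Fin k × Fin m) (Fin (k - 1) × Fin n) F) :
    Matrix (Fin k × Fin m) (Fin k × Fin n) F :=
  Matrix.of fun p q =>
    if h : (q.1 : ℕ) = 0 then v p.1 * A (Fin.last k) p.2 q.2
    else -W p (⟨(q.1 : ℕ) - 1, by have := q.1.isLt; omega⟩, q.2)

/-- `Y = [W + v ⊗ [A_{k-1} ⋯ A_1] ∣ v ⊗ A_0]`. -/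
def L1Y {k m n : ℕ} (A : Fin (k + 1) → Matrix (Fin m) (Fin n) F) (v : Fin k → F)
    (W : Matrix (Fin k × Fin m) (Fin (k - 1) × Fin n) F) :
    Matrix (Fin k × Fin m) (Fin k × Fin n) F :=
  Matrix.of fun p q =>
    if h : (q.1 : ℕ) < k - 1 then
      W p (⟨(q.1 : ℕ), h⟩, q.2) + v p.1 * A (⟨k - 1 - (q.1 : ℕ), by omega⟩) p.2 q.2
    else v p.1 * A 0 p.2 q.2

/-- `X = [wᵀ ⊗ A_k ; -Ŵ]`. -/
def L2X {k m n : ℕ} (A : Fin (k + 1) → Matrix (Fin m) (Fin n) F) (w : Fin k → F)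
    (W : Matrix (Fin (k - 1) × Fin m) (Fin k × Fin n) F) :
    Matrix (Fin k × Fin m) (Fin k × Fin n) F :=
  Matrix.of fun p q =>
    if h : (p.1 : ℕ) = 0 then w q.1 * A (Fin.last k) p.2 q.2
    else -W (⟨(p.1 : ℕ) - 1, by have := p.1.isLt; omega⟩, p.2) q

/-- `Y = [Ŵ + wᵀ ⊗ [A_{k-1}ᵀ ⋯ A_1ᵀ]ᵀ ; wᵀ ⊗ A_0]`. -/
def L2Y {k m n : ℕ} (A : Fin (k + 1) → Matrix (Fin m) (Fin n) F) (w : Fin k → F)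
    (W : Matrix (Fin (k - 1) × Fin m) (Fin k × Fin n) F) :
    Matrix (Fin k × Fin m) (Fin k × Fin n) F :=
  Matrix.of fun p q =>
    if h : (p.1 : ℕ) < k - 1 then
      W (⟨(p.1 : ℕ), h⟩, p.2) q + w q.1 * A (⟨k - 1 - (p.1 : ℕ), by omega⟩) p.2 q.2
    else w q.1 * A 0 p.2 q.2

/-! ### block structure and `Z`-matrices -/

/-- Assemble a `km × kn` matrix from blocks with row split `m + (k-1)m` and
column split `n + (k-1)n`. -/
def blk {k m n : ℕ} (TL : Matrix (Fin m) (Fin n) F)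
    (TR : Matrix (Fin m) (Fin (k - 1) × Fin n) F)
    (BL : Matrix (Fin (k - 1) × Fin m) (Fin n) F)
    (BR : Matrix (Fin (k - 1) × Fin m) (Fin (k - 1) × Fin n) F) :
    Matrix (Fin k × Fin m) (Fin k × Fin n) F :=
  Matrix.of fun p q =>
    if hp : (p.1 : ℕ) = 0 then
      if hq : (q.1 : ℕ) = 0 then TL p.2 q.2
      else TR p.2 (⟨(q.1 : ℕ) - 1, by have := q.1.isLt; omega⟩, q.2)
    else
      if hq : (q.1 : ℕ) = 0 then
        BL (⟨(p.1 : ℕ) - 1, by have := p.1.isLt; omega⟩, p.2) q.2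
      else
        BR (⟨(p.1 : ℕ) - 1, by have := p.1.isLt; omega⟩, p.2)
          (⟨(q.1 : ℕ) - 1, by have := q.1.isLt; omega⟩, q.2)

/-- Assemble `[[Y₁₁, T],[Z, 0]]`, row split `m + (k-1)m`, column split `(k-1)n + n`. -/
def blkY1 {k m n : ℕ} (Y11 : Matrix (Fin m) (Fin (k - 1) × Fin n) F)
    (T : Matrix (Fin m) (Fin n) F)
    (Z : Matrix (Fin (k - 1) × Fin m) (Fin (k - 1) × Fin n) F) :
    Matrix (Fin k × Fin m) (Fin k × Fin n) F :=
  Matrix.of fun p q =>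
    if hp : (p.1 : ℕ) = 0 then
      if hq : (q.1 : ℕ) < k - 1 then Y11 p.2 (⟨(q.1 : ℕ), hq⟩, q.2) else T p.2 q.2
    else
      if hq : (q.1 : ℕ) < k - 1 then
        Z (⟨(p.1 : ℕ) - 1, by have := p.1.isLt; omega⟩, p.2) (⟨(q.1 : ℕ), hq⟩, q.2)
      else 0

/-- Assemble `[[Y₁₁, Z],[T, 0]]`, row split `(k-1)m + m`, column split `n + (k-1)n`. -/
def blkY2 {k m n : ℕ} (Y11 : Matrix (Fin (k - 1) × Fin m) (Fin n) F)
    (Z : Matrix (Fin (k - 1) × Fin m) (Fin (k - 1) × Fin n) F)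
    (T : Matrix (Fin m) (Fin n) F) :
    Matrix (Fin k × Fin m) (Fin k × Fin n) F :=
  Matrix.of fun p q =>
    if hp : (p.1 : ℕ) < k - 1 then
      if hq : (q.1 : ℕ) = 0 then Y11 (⟨(p.1 : ℕ), hp⟩, p.2) q.2
      else Z (⟨(p.1 : ℕ), hp⟩, p.2) (⟨(q.1 : ℕ) - 1, by have := q.1.isLt; omega⟩, q.2)
    else
      if hq : (q.1 : ℕ) = 0 then T p.2 q.2 else 0

/-- The `Z`-matrix of `L = λX + Y ∈ 𝕃₁(P)` with respect to `M`:
the lower-left `(k-1)m × (k-1)n` block of `(M ⊗ I_m) Y`. -/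
def Zmat1 {k m n : ℕ} (M : Matrix (Fin k) (Fin k) F)
    (Yc : Matrix (Fin k × Fin m) (Fin k × Fin n) F) :
    Matrix (Fin (k - 1) × Fin m) (Fin (k - 1) × Fin n) F :=
  Matrix.of fun p q =>
    (kronId M * Yc : Matrix (Fin k × Fin m) (Fin k × Fin n) F)
      (⟨(p.1 : ℕ) + 1, by have := p.1.isLt; omega⟩, p.2)
      (⟨(q.1 : ℕ), by have := q.1.isLt; omega⟩, q.2)

/-- The `Z`-matrix of `L = λX + Y ∈ 𝕃₂(P)` with respect to `M̂`:
the upper-right `(k-1)m × (k-1)n` block of `Y (M̂ᵀ ⊗ I_n)`. -/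
def Zmat2 {k m n : ℕ} (M : Matrix (Fin k) (Fin k) F)
    (Yc : Matrix (Fin k × Fin m) (Fin k × Fin n) F) :
    Matrix (Fin (k - 1) × Fin m) (Fin (k - 1) × Fin n) F :=
  Matrix.of fun p q =>
    (Yc * kronId Mᵀ : Matrix (Fin k × Fin m) (Fin k × Fin n) F)
      (⟨(p.1 : ℕ), by have := p.1.isLt; omega⟩, p.2)
      (⟨(q.1 : ℕ) + 1, by have := q.1.isLt; omega⟩, q.2)

/-- `L = λX + Y ∈ 𝕃₁(P)` with right ansatz vector `v` has full `Z`-rank. -/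
def FullZrank1 {k m n : ℕ} (Yc : Matrix (Fin k × Fin m) (Fin k × Fin n) F)
    (v : Fin k → F) : Prop :=
  ∃ (M : Matrix (Fin k) (Fin k) F) (α : F),
    IsUnit M ∧ α ≠ 0 ∧ M.mulVec v = e1 α ∧ (Zmat1 M Yc).rank = (k - 1) * n

/-- `L = λX + Y ∈ 𝕃₂(P)` with left ansatz vector `w` has full `Z`-rank. -/
def FullZrank2 {k m n : ℕ} (Yc : Matrix (Fin k × Fin m) (Fin k × Fin n) F)
    (w : Fin k → F) : Prop :=
  ∃ (M : Matrix (Fin k) (Fin k) F) (α : F),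
    IsUnit M ∧ α ≠ 0 ∧ M.mulVec w = e1 α ∧ (Zmat2 M Yc).rank = (k - 1) * m

/-! ### null spaces, minimal bases and minimal indices over `F(λ)` -/

/-- A matrix polynomial viewed as a matrix over the field of rational functions. -/
def matRF {ρ γ : Type*} (P : Matrix ρ γ F[X]) : Matrix ρ γ (RatFunc F) :=
  P.map (algebraMap F[X] (RatFunc F))

/-- The right null space `N_r(P) = {x(λ) : P(λ) x(λ) ≡ 0}` over `F(λ)`. -/
def Nr {ρ γ : Type*} [Fintype γ] (P : Matrix ρ γ F[X]) :
    Submodule (RatFunc F) (γ → RatFunc F) :=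
  LinearMap.ker (Matrix.mulVecLin (matRF P))

/-- The left null space `N_l(P) = {y(λ) : y(λ)ᵀ P(λ) ≡ 0}` over `F(λ)`. -/
def Nl {ρ γ : Type*} [Fintype ρ] (P : Matrix ρ γ F[X]) :
    Submodule (RatFunc F) (ρ → RatFunc F) :=
  Nr Pᵀ

/-- The normal rank of a matrix polynomial: its rank over `F(λ)`. -/
def nrank {ρ γ : Type*} [Fintype γ] (P : Matrix ρ γ F[X]) : ℕ :=
  (matRF P).rank

/-- The rational vector determined by a vector polynomial. -/
def polyVec {γ : Type*} (x : γ → F[X]) : γ → RatFunc F :=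
  fun i => algebraMap F[X] (RatFunc F) (x i)

/-- A rational vector is a vector polynomial if all its entries are polynomials. -/
def IsVecPoly {γ : Type*} (x : γ → RatFunc F) : Prop :=
  ∃ p : γ → F[X], x = polyVec p

/-- The degree of a vector polynomial: the greatest degree of its components. -/
def polyVecDeg {γ : Type*} [Fintype γ] (x : γ → F[X]) : ℕ :=
  Finset.univ.sup fun i => (x i).natDegree

/-- A polynomial basis of the subspace `V` of `F(λ)^γ`. -/
def IsPolyBasis {γ ι : Type*} [Fintype γ]
    (V : Submodule (RatFunc F) (γ → RatFunc F)) (b : ι → γ → F[X]) : Prop :=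
  LinearIndependent (RatFunc F) (fun i => polyVec (b i)) ∧
    Submodule.span (RatFunc F) (Set.range fun i => polyVec (b i)) = V

/-- A minimal basis of `V`: a polynomial basis of least order (sum of degrees). -/
def IsMinimalBasis {γ ι : Type*} [Fintype γ] [Fintype ι]
    (V : Submodule (RatFunc F) (γ → RatFunc F)) (b : ι → γ → F[X]) : Prop :=
  IsPolyBasis V b ∧
    ∀ (d : ℕ) (b' : Fin d → γ → F[X]), IsPolyBasis V b' →
      ∑ i, polyVecDeg (b i) ≤ ∑ i, polyVecDeg (b' i)

/-- `ε` is the list of minimal indices of `V`: some minimal basis of `V` has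
`ε` as its list of degrees. -/
def HasMinIndices {γ : Type*} [Fintype γ]
    (V : Submodule (RatFunc F) (γ → RatFunc F)) {d : ℕ} (ε : Fin d → ℕ) : Prop :=
  ∃ b : Fin d → γ → F[X], IsMinimalBasis V b ∧ ∀ i, polyVecDeg (b i) = ε i

/-- `Λ_k(λ) ⊗ x(λ)`. -/
def lamTensor {n : ℕ} (k : ℕ) (x : Fin n → RatFunc F) : Fin k × Fin n → RatFunc F :=
  fun p => algebraMap F[X] (RatFunc F) (Polynomial.X ^ (k - 1 - (p.1 : ℕ))) * x p.2

/-- The matrix `vᵀ ⊗ I_m` over `F(λ)`; `𝓛_v(y) = (vproj v).mulVec y`. -/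
def vproj {k m : ℕ} (v : Fin k → F) : Matrix (Fin m) (Fin k × Fin m) (RatFunc F) :=
  Matrix.of fun r p =>
    if r = p.2 then algebraMap F[X] (RatFunc F) (Polynomial.C (v p.1)) else 0

/-- `(vᵀ ⊗ I_m) y` at the level of vector polynomials. -/
def LvPoly {k m : ℕ} (v : Fin k → F) (y : Fin k × Fin m → F[X]) : Fin m → F[X] :=
  fun r => ∑ i : Fin k, Polynomial.C (v i) * y (i, r)

/-- The rational subspace spanned by the rows of a matrix polynomial. -/
def rowSpan {ρ γ : Type*} [Fintype γ] (B : Matrix ρ γ F[X]) :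
    Submodule (RatFunc F) (γ → RatFunc F) :=
  Submodule.span (RatFunc F) (Set.range fun i => polyVec (B i))

/-- A matrix polynomial is a minimal basis if its rows form a minimal basis of the
rational subspace they span. -/
def IsMinimalBasisMat {ρ γ : Type*} [Fintype ρ] [Fintype γ] (B : Matrix ρ γ F[X]) : Prop :=
  IsMinimalBasis (rowSpan B) (fun i => B i)

/-- Dual minimal bases: `B ∈ F[λ]^{n₁×n}`, `C ∈ F[λ]^{n₂×n}` minimal bases with
`n₁ + n₂ = n` and `B Cᵀ = 0`. -/
def DualMinBases {ρ ρ' γ : Type*} [Fintype ρ] [Fintype ρ'] [Fintype γ]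
    (B : Matrix ρ γ F[X]) (Cm : Matrix ρ' γ F[X]) : Prop :=
  IsMinimalBasisMat B ∧ IsMinimalBasisMat Cm ∧
    Fintype.card ρ + Fintype.card ρ' = Fintype.card γ ∧ B * Cmᵀ = 0

/-! ### norms, singular values -/

/-- Square of the Frobenius norm of a constant matrix. -/
def frobSq {ρ γ : Type*} [Fintype ρ] [Fintype γ] (Ac : Matrix ρ γ F) : ℝ :=
  ∑ i, ∑ j, ‖Ac i j‖ ^ 2

/-- `‖λX + Y‖_F = sqrt(‖X‖_F² + ‖Y‖_F²)`. -/
def penFrob {ρ γ : Type*} [Fintype ρ] [Fintype γ] (Xc Yc : Matrix ρ γ F) : ℝ :=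
  Real.sqrt (frobSq Xc + frobSq Yc)

/-- `‖P‖_F = sqrt(∑ ‖A_i‖_F²)` for `P(λ) = ∑ λ^i A_i`. -/
def famFrob {k m n : ℕ} (A : Fin (k + 1) → Matrix (Fin m) (Fin n) F) : ℝ :=
  Real.sqrt (∑ i, frobSq (A i))

/-- `‖P‖_F` for a matrix polynomial of grade `g`. -/
def mpolyFrob {ρ γ : Type*} [Fintype ρ] [Fintype γ] (g : ℕ) (P : Matrix ρ γ F[X]) : ℝ :=
  Real.sqrt (∑ i, ∑ j, ∑ d ∈ Finset.range (g + 1), ‖(P i j).coeff d‖ ^ 2)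

/-- Square of the Euclidean norm of a vector. -/
def vecNormSq {ι : Type*} [Fintype ι] (x : ι → F) : ℝ := ∑ i, ‖x i‖ ^ 2

/-- The smallest singular value of a matrix. -/
def sigmaMin {ρ γ : Type*} [Fintype ρ] [Fintype γ] (Ac : Matrix ρ γ F) : ℝ :=
  if Fintype.card γ ≤ Fintype.card ρ then
    sInf {r : ℝ | ∃ x : γ → F, vecNormSq x = 1 ∧ r = Real.sqrt (vecNormSq (Ac.mulVec x))}
  else
    sInf {r : ℝ | ∃ y : ρ → F, vecNormSq y = 1 ∧ r = Real.sqrt (vecNormSq (Acᴴ.mulVec y))}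

/-- The spectral norm (2-norm) of a matrix. -/
def norm2 {ρ γ : Type*} [Fintype ρ] [Fintype γ] (Ac : Matrix ρ γ F) : ℝ :=
  sSup {r : ℝ | ∃ x : γ → F, vecNormSq x = 1 ∧ r = Real.sqrt (vecNormSq (Ac.mulVec x))}

/-- `κ₂(D) = ‖D‖₂ ‖D⁻¹‖₂`. -/
def cond2 {ρ : Type*} [Fintype ρ] [DecidableEq ρ] (Dc : Matrix ρ ρ F) : ℝ :=
  norm2 Dc * norm2 Dc⁻¹

/-! ### pencils used in the backward error analysis -/

/-- `B(λ) = λ [0 ∣ -R̃] + [R̃ ∣ 0]`, i.e. `R̃ (H_{k-1}(λ) ⊗ I_n)` up to sign conventions. -/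
def Bpencil {k n : ℕ} (R : Matrix (Fin (k - 1) × Fin n) (Fin (k - 1) × Fin n) F) :
    Matrix (Fin (k - 1) × Fin n) (Fin k × Fin n) F[X] :=
  Matrix.of fun p q =>
    (if h : (q.1 : ℕ) < k - 1 then Polynomial.C (R p (⟨(q.1 : ℕ), h⟩, q.2)) else 0) +
    (if h : 0 < (q.1 : ℕ) then
        Polynomial.X *
          Polynomial.C (-R p (⟨(q.1 : ℕ) - 1, by have := q.1.isLt; omega⟩, q.2))
      else 0)

/-- The coefficient of `λ` in `H_{k-1}(λ) ⊗ I_n`. -/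
def Hlam (F : Type*) [RCLike F] (k n : ℕ) :
    Matrix (Fin (k - 1) × Fin n) (Fin k × Fin n) F :=
  Matrix.of fun p q => if p.2 = q.2 ∧ (q.1 : ℕ) = (p.1 : ℕ) + 1 then 1 else 0

/-- The constant coefficient of `H_{k-1}(λ) ⊗ I_n`. -/
def Hconst (F : Type*) [RCLike F] (k n : ℕ) :
    Matrix (Fin (k - 1) × Fin n) (Fin k × Fin n) F :=
  Matrix.of fun p q => if p.2 = q.2 ∧ (q.1 : ℕ) = (p.1 : ℕ) then -1 else 0

/-- The convolution matrix `C_j(λ Xc + Yc)` of a pencil, with `j+1` block columns. -/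
def convPencil {ρ γ : Type*} (Xc Yc : Matrix ρ γ F) (j : ℕ) :
    Matrix (Fin (j + 2) × ρ) (Fin (j + 1) × γ) F :=
  Matrix.of fun r c =>
    if (r.1 : ℕ) = (c.1 : ℕ) then Xc r.2 c.2
    else if (r.1 : ℕ) = (c.1 : ℕ) + 1 then Yc r.2 c.2 else 0

/-- λ-coefficient of the trimmed pencil `L̂_t(λ)`:
`[[α A_k, X₁₂],[0, -R̃]]` with row split `m + (k-1)n`. -/
def LtX {k m n : ℕ} (α : F) (Ak : Matrix (Fin m) (Fin n) F)
    (X12 : Matrix (Fin m) (Fin (k - 1) × Fin n) F)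
    (R : Matrix (Fin (k - 1) × Fin n) (Fin (k - 1) × Fin n) F) :
    Matrix (Fin m ⊕ (Fin (k - 1) × Fin n)) (Fin k × Fin n) F :=
  Matrix.of fun s q =>
    Sum.elim
      (fun r => if h : (q.1 : ℕ) = 0 then α * Ak r q.2
        else X12 r (⟨(q.1 : ℕ) - 1, by have := q.1.isLt; omega⟩, q.2))
      (fun p => if h : (q.1 : ℕ) = 0 then 0
        else -R p (⟨(q.1 : ℕ) - 1, by have := q.1.isLt; omega⟩, q.2)) s

/-- Constant coefficient of the trimmed pencil `L̂_t(λ)`: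
`[[Y₁₁, α A₀],[R̃, 0]]` with row split `m + (k-1)n`. -/
def LtY {k m n : ℕ} (α : F) (A0 : Matrix (Fin m) (Fin n) F)
    (Y11 : Matrix (Fin m) (Fin (k - 1) × Fin n) F)
    (R : Matrix (Fin (k - 1) × Fin n) (Fin (k - 1) × Fin n) F) :
    Matrix (Fin m ⊕ (Fin (k - 1) × Fin n)) (Fin k × Fin n) F :=
  Matrix.of fun s q =>
    Sum.elim
      (fun r => if h : (q.1 : ℕ) < k - 1 then Y11 r (⟨(q.1 : ℕ), h⟩, q.2)
        else α * A0 r q.2)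
      (fun p => if h : (q.1 : ℕ) < k - 1 then R p (⟨(q.1 : ℕ), h⟩, q.2) else 0) s

/-! ### trimming -/

/-- The rows `[0 ∣ Q₂*] (M ⊗ I_m)`. -/
def bottomRows {k m n c : ℕ} (M : Matrix (Fin k) (Fin k) F)
    (Q : Matrix (Fin (k - 1) × Fin m) ((Fin (k - 1) × Fin n) ⊕ Fin c) F) :
    Matrix (Fin c) (Fin k × Fin m) F :=
  (Matrix.of fun (j : Fin c) (p : Fin k × Fin m) =>
      if h : (p.1 : ℕ) = 0 then 0
      else star (Q (⟨(p.1 : ℕ) - 1, by have := p.1.isLt; omega⟩, p.2) (Sum.inr j)))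
    * kronId M

/-- The square matrix `[D ; [0 ∣ Q₂*](M ⊗ I_m)]` whose invertibility makes `D` admissible. -/
def trimAux {k m n c : ℕ} (M : Matrix (Fin k) (Fin k) F)
    (Q : Matrix (Fin (k - 1) × Fin m) ((Fin (k - 1) × Fin n) ⊕ Fin c) F)
    (D : Matrix (Fin m ⊕ (Fin (k - 1) × Fin n)) (Fin k × Fin m) F) :
    Matrix ((Fin m ⊕ (Fin (k - 1) × Fin n)) ⊕ Fin c) (Fin k × Fin m) F :=
  Matrix.of (Sum.elim (fun i j => D i j) (fun i j => bottomRows M Q i j))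

/-- The columns `(M̂ᵀ ⊗ I_n) [0 ; Q₂]`. -/
def rightCols {k m n c : ℕ} (M : Matrix (Fin k) (Fin k) F)
    (Q : Matrix (Fin (k - 1) × Fin n) ((Fin (k - 1) × Fin m) ⊕ Fin c) F) :
    Matrix (Fin k × Fin n) (Fin c) F :=
  kronId Mᵀ *
    (Matrix.of fun (q : Fin k × Fin n) (j : Fin c) =>
      if h : (q.1 : ℕ) = 0 then 0
      else Q (⟨(q.1 : ℕ) - 1, by have := q.1.isLt; omega⟩, q.2) (Sum.inr j))

/-- The square matrix `[D̂ ∣ (M̂ᵀ ⊗ I_n)[0 ; Q₂]]` whose invertibility makes `D̂` admissible. -/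
def trimAux2 {k m n c : ℕ} (M : Matrix (Fin k) (Fin k) F)
    (Q : Matrix (Fin (k - 1) × Fin n) ((Fin (k - 1) × Fin m) ⊕ Fin c) F)
    (D : Matrix (Fin k × Fin n) (Fin n ⊕ (Fin (k - 1) × Fin m)) F) :
    Matrix (Fin k × Fin n) ((Fin n ⊕ (Fin (k - 1) × Fin m)) ⊕ Fin c) F :=
  Matrix.of fun q s => Sum.elim (fun t => D q t) (fun j => rightCols M Q q j) s



/-!
Write a block vector `x` of `C_j(τ)` coordinatewise as a function `g a b` on the grid of
block indices (zero outside the box). Then `(C_j(τ) x)(r, p) = g(r, p + 1) - g(r - 1, p)`: the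
convolution matrix is a first difference operator along the diagonals `a - b = const`, and the
rows and columns decouple into one path per diagonal.

On a path the Dirichlet–Neumann inequality `4 sin² θ_m · ∑ |y_t|² ≤ ∑ |y_{t+1} - y_t|²`, with
`θ_m = π / (4m - 2)`, holds as soon as the path has fewer than `m` unknowns and vanishes just
outside one of its ends; it is proved by an explicit `LDLᵀ` factorisation whose pivots are
ratios of the ground state `sin ((2t + 2)θ_m)`. For `j ≤ k - 2` every diagonal meets the box in at
most `j + 1` positions and leaves it at one end, which gives `σ_min ≥ 2 sin θ_{j+2}`; equality is
attained by the ground state `cos ((2t + 1)θ)` placed on the main diagonal. For `j ≥ k - 1` the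
matrix is wide, `σ_min` is read off `C_j(τ)ᴴ`, which is the same difference operator on the
transposed grid, and the same argument gives `2 sin θ_k`. Both cases give `2 sin θ_k` for
`j = k - 2` and `j = k - 1`, and `sin x ≥ x - x³/6` gives the bound `3/(2k)`.
-/

open Finset Real

/-- `4 sin² (chainAngle m)` is the smallest eigenvalue of the path Laplacian on `m - 1` nodes
with a Dirichlet condition at one end and a Neumann condition at the other. -/
def chainAngle (m : ℕ) : ℝ := π / (4 * m - 2)

section ChainAngle

variable {m : ℕ}

lemma mul_chainAngle (hm : 1 ≤ m) : (4 * m - 2 : ℝ) * chainAngle m = π := by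
  have : (1 : ℝ) ≤ m := by exact_mod_cast hm
  rw [chainAngle, mul_div_cancel₀]
  linarith

lemma chainAngle_pos (hm : 1 ≤ m) : 0 < chainAngle m := by
  have : (1 : ℝ) ≤ m := by exact_mod_cast hm
  exact div_pos Real.pi_pos (by linarith)

lemma sin_mul_chainAngle_pos (hm : 2 ≤ m) {a : ℝ} (ha : 0 < a) (ha' : a ≤ 2 * m) :
    0 < sin (a * chainAngle m) := by
  have : (2 : ℝ) ≤ m := by exact_mod_cast hm
  have hθ := chainAngle_pos (m := m) (by omega)
  have hπ := mul_chainAngle (m := m) (by omega)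
  exact Real.sin_pos_of_pos_of_lt_pi (by positivity) (by nlinarith)

lemma cos_mul_chainAngle_nonneg (hm : 1 ≤ m) {a : ℝ} (ha : 0 ≤ a) (ha' : a ≤ 2 * m - 1) :
    0 ≤ cos (a * chainAngle m) := by
  have hθ := chainAngle_pos hm
  have hπ := mul_chainAngle hm
  exact Real.cos_nonneg_of_mem_Icc ⟨by nlinarith [Real.pi_pos], by nlinarith⟩

lemma two_mul_sin_chainAngle_pos (hm : 2 ≤ m) : 0 < 2 * sin (chainAngle m) := by
  have := sin_mul_chainAngle_pos (a := 1) hm one_pos (by norm_cast; omega)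
  rw [one_mul] at this
  positivity

lemma cos_mul_chainAngle_succ (A : ℕ) : cos ((2 * A + 1) * chainAngle (A + 1)) = 0 := by
  have h := mul_chainAngle (m := A + 1) (by omega)
  push_cast at h
  rw [show (2 * (A : ℝ) + 1) * chainAngle (A + 1) = π / 2 by linarith, Real.cos_pi_div_two]

lemma three_div_le_two_mul_sin_chainAngle (hm : 2 ≤ m) :
    3 / (2 * (m : ℝ)) ≤ 2 * sin (chainAngle m) := by
  have hm' : (2 : ℝ) ≤ m := by exact_mod_cast hm
  set x := chainAngle m
  have hπ := mul_chainAngle (m := m) (by omega)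
  have hx := chainAngle_pos (m := m) (by omega)
  have hx6 : x ≤ 0.53 := by nlinarith [Real.pi_lt_d2]
  have hsin := Real.sin_gt_sub_cube hx
  have h4mx : 4 * m * x = π + 2 * x := by linarith
  have hcubic : 2 * (x - x ^ 3 / 6) * (2 * m) = (π + 2 * x) * (1 - x ^ 2 / 6) := by
    linear_combination (1 - x ^ 2 / 6) * h4mx
  have hthree : 3 ≤ (π + 2 * x) * (1 - x ^ 2 / 6) := by
    nlinarith [Real.pi_gt_three, Real.pi_lt_d2, mul_le_mul_of_nonneg_left hx6 hx.le,
      mul_le_mul_of_nonneg_left hx6 (mul_pos hx hx).le]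
  rw [div_le_iff₀ (by positivity)]
  nlinarith

end ChainAngle

lemma two_sub_two_cos_two_mul (θ : ℝ) : 2 - 2 * cos (2 * θ) = (2 * sin θ) ^ 2 := by
  rw [Real.cos_two_mul, Real.cos_sq']
  ring

section Chain

variable {m : ℕ}

/-- Ratios of consecutive values of the ground state `t ↦ sin ((2t + 2)θ)`: the pivots of an
`LDLᵀ` factorisation of the path Laplacian. -/
def chainRatio (m t : ℕ) : ℝ :=
  sin ((2 * t + 4) * chainAngle m) / sin ((2 * t + 2) * chainAngle m)

lemma one_le_chainRatio {t : ℕ} (ht : t + 2 ≤ m) : 1 ≤ chainRatio m t := by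
  have htm : (t : ℝ) + 2 ≤ m := by exact_mod_cast ht
  set θ := chainAngle m
  have hden : 0 < sin ((2 * t + 2) * θ) := sin_mul_chainAngle_pos (by omega) (by positivity)
    (by linarith)
  have hθ : 0 < sin θ := by
    simpa using sin_mul_chainAngle_pos (a := 1) (m := m) (by omega) one_pos (by linarith)
  have hcos : 0 ≤ cos ((2 * t + 3) * θ) :=
    cos_mul_chainAngle_nonneg (by omega) (by positivity) (by linarith)
  have hdiff : sin ((2 * t + 4) * θ) - sin ((2 * t + 2) * θ)
      = 2 * cos ((2 * t + 3) * θ) * sin θ := by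
    rw [show (2 * t + 4) * θ = (2 * t + 3) * θ + θ by ring,
      show (2 * t + 2) * θ = (2 * t + 3) * θ - θ by ring, Real.sin_add, Real.sin_sub]
    ring
  rw [chainRatio, le_div_iff₀ hden, one_mul]
  nlinarith

lemma chainRatio_zero (hm : 2 ≤ m) : chainRatio m 0 = 2 * cos (2 * chainAngle m) := by
  have h : 0 < sin (2 * chainAngle m) :=
    sin_mul_chainAngle_pos hm two_pos (by norm_cast; omega)
  rw [chainRatio, div_eq_iff (by simpa using h.ne')]
  push_cast
  rw [show (2 * 0 + 4) * chainAngle m = 2 * (2 * chainAngle m) by ring, Real.sin_two_mul]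
  ring_nf

lemma chainRatio_succ {t : ℕ} (ht : t + 2 ≤ m) :
    chainRatio m (t + 1) = 2 * cos (2 * chainAngle m) - (chainRatio m t)⁻¹ := by
  have htm : (t : ℝ) + 2 ≤ m := by exact_mod_cast ht
  set θ := chainAngle m
  have hden : 0 < sin ((2 * t + 4) * θ) := sin_mul_chainAngle_pos (by omega) (by positivity)
    (by linarith)
  have hsum : sin ((2 * t + 6) * θ) + sin ((2 * t + 2) * θ)
      = 2 * cos (2 * θ) * sin ((2 * t + 4) * θ) := by
    rw [show (2 * t + 6) * θ = (2 * t + 4) * θ + 2 * θ by ring,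
      show (2 * t + 2) * θ = (2 * t + 4) * θ - 2 * θ by ring, Real.sin_add, Real.sin_sub]
    ring
  rw [chainRatio, chainRatio, inv_div]
  push_cast
  rw [show (2 * ((t : ℝ) + 1) + 4) * θ = (2 * t + 6) * θ by ring,
    show (2 * ((t : ℝ) + 1) + 2) * θ = (2 * t + 4) * θ by ring,
    eq_sub_iff_add_eq, ← add_div, div_eq_iff hden.ne', hsum]

variable {E : Type*} [SeminormedAddCommGroup E]

lemma chain_invariant (y : ℕ → E) {t : ℕ} (ht : t + 2 ≤ m) :
    (2 - 2 * cos (2 * chainAngle m)) * ∑ s ∈ range (t + 1), ‖y s‖ ^ 2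
        + (chainRatio m t - 1) * ‖y t‖ ^ 2
      ≤ ‖y 0‖ ^ 2 + ∑ s ∈ range t, ‖y (s + 1) - y s‖ ^ 2 := by
  induction t with
  | zero =>
    rw [chainRatio_zero (by omega)]
    simp only [zero_add, range_one, sum_singleton, range_zero, sum_empty, add_zero]
    linarith
  | succ t ih =>
    rw [sum_range_succ (fun s => ‖y s‖ ^ 2) (t + 1),
      sum_range_succ (fun s => ‖y (s + 1) - y s‖ ^ 2) t, chainRatio_succ (by omega)]
    have hc := one_le_chainRatio (m := m) (t := t) (by omega)
    have := ih (by omega)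
    set c := chainRatio m t
    set a := ‖y t‖
    set b := ‖y (t + 1)‖
    have hab : (b - a) ^ 2 ≤ ‖y (t + 1) - y t‖ ^ 2 := by
      rw [← sq_abs]
      exact pow_le_pow_left₀ (abs_nonneg _) (abs_norm_sub_norm_le _ _) 2
    have hstep : b ^ 2 - c⁻¹ * b ^ 2 ≤ (c - 1) * a ^ 2 + (b - a) ^ 2 := by
      have hc0 : 0 < c := by linarith
      have : (c * a - b) ^ 2 / c = (c - 1) * a ^ 2 + (b - a) ^ 2 - (b ^ 2 - c⁻¹ * b ^ 2) := by
        field_simp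
        ring
      linarith [div_nonneg (sq_nonneg (c * a - b)) hc0.le]
    linarith

theorem chain_sum_le (y : ℕ → E) {L : ℕ} (hL : L < m) :
    (2 * sin (chainAngle m)) ^ 2 * ∑ t ∈ range L, ‖y t‖ ^ 2
      ≤ ‖y 0‖ ^ 2 + ∑ t ∈ range (L - 1), ‖y (t + 1) - y t‖ ^ 2 := by
  obtain _ | t := L
  · simp only [range_zero, sum_empty, mul_zero]
    positivity
  · have hinv := chain_invariant y (m := m) (t := t) (by omega)
    have hc := one_le_chainRatio (m := m) (t := t) (by omega)
    rw [← two_sub_two_cos_two_mul, Nat.add_sub_cancel]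
    nlinarith [sq_nonneg ‖y t‖]

lemma sum_range_eq_sum_range_add_of_support {M : Type*} [AddCommMonoid M] (f : ℕ → M)
    {s L : ℕ} (hf : ∀ t, f t ≠ 0 → s ≤ t ∧ t < s + L) (N : ℕ) :
    ∑ t ∈ range N, f t = ∑ u ∈ range (min (N - s) L), f (s + u) := by
  rw [← sum_subset (s₁ := Ico s (s + min (N - s) L)), sum_Ico_eq_sum_range,
    Nat.add_sub_cancel_left]
  · intro t ht
    simp only [mem_Ico, mem_range] at ht ⊢
    omega
  · intro t ht ht'
    simp only [mem_Ico, mem_range] at ht ht'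
    by_contra h
    have := hf t h
    omega

theorem chain_le_of_support_Ico (y : ℕ → E) {s L : ℕ} (hs : 1 ≤ s) (hL : L < m)
    (hy : ∀ t, y t ≠ 0 → s ≤ t ∧ t < s + L) (N : ℕ) :
    (2 * sin (chainAngle m)) ^ 2 * ∑ t ∈ range N, ‖y t‖ ^ 2
      ≤ ∑ t ∈ range (N - 1), ‖y (t + 1) - y t‖ ^ 2 := by
  have hnorm := sum_range_eq_sum_range_add_of_support (fun t => ‖y t‖ ^ 2)
    (fun t ht => hy t fun h => ht (by simp [h])) N
  set M := min (N - s) L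
  obtain hM | ⟨M', hM'⟩ : M = 0 ∨ ∃ M', M = M' + 1 := by
    rcases M with _ | M' <;> simp
  · rw [hnorm, hM, range_zero, sum_empty, mul_zero]
    positivity
  have hys : y (s - 1) = 0 := by
    by_contra h
    have := hy _ h
    omega
  have hdiff : ‖y s‖ ^ 2 + ∑ u ∈ range M', ‖y (s + (u + 1)) - y (s + u)‖ ^ 2
      ≤ ∑ t ∈ range (N - 1), ‖y (t + 1) - y t‖ ^ 2 :=
    calc ‖y s‖ ^ 2 + ∑ u ∈ range M', ‖y (s + (u + 1)) - y (s + u)‖ ^ 2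
        = ∑ t ∈ Ico (s - 1) (s - 1 + M), ‖y (t + 1) - y t‖ ^ 2 := by
          rw [sum_Ico_eq_sum_range, Nat.add_sub_cancel_left, hM', sum_range_succ']
          simp only [add_zero, Nat.sub_add_cancel hs, hys, sub_zero]
          rw [add_comm]
          congr 2 with u
          congr 4 <;> omega
      _ ≤ _ := by
          refine sum_le_sum_of_subset_of_nonneg (fun t ht => ?_) fun _ _ _ => by positivity
          simp only [mem_Ico, mem_range] at ht ⊢
          omega
  have := chain_sum_le (m := m) (fun u => y (s + u)) (L := M) (by omega)
  rw [hM', Nat.add_sub_cancel] at this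
  rw [hnorm, hM']
  simp only [add_zero] at this
  linarith

theorem chain_le_of_support_lt (y : ℕ → E) {L N : ℕ} (hL : L < m) (hLN : L < N)
    (hy : ∀ t, y t ≠ 0 → t < L) :
    (2 * sin (chainAngle m)) ^ 2 * ∑ t ∈ range N, ‖y t‖ ^ 2
      ≤ ∑ t ∈ range (N - 1), ‖y (t + 1) - y t‖ ^ 2 := by
  set y' : ℕ → E := fun t => if t < N then y (N - 1 - t) else 0
  have h := chain_le_of_support_Ico y' (s := N - L) (L := L) (by omega) hL ?_ N
  · have hnorm : ∑ t ∈ range N, ‖y' t‖ ^ 2 = ∑ t ∈ range N, ‖y t‖ ^ 2 := by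
      rw [← sum_range_reflect (fun t => ‖y t‖ ^ 2)]
      refine sum_congr rfl fun t ht => ?_
      simp only [y', if_pos (mem_range.mp ht)]
    have hdiff : ∑ t ∈ range (N - 1), ‖y' (t + 1) - y' t‖ ^ 2
        = ∑ t ∈ range (N - 1), ‖y (t + 1) - y t‖ ^ 2 := by
      rw [← sum_range_reflect (fun t => ‖y (t + 1) - y t‖ ^ 2)]
      refine sum_congr rfl fun t ht => ?_
      simp only [mem_range] at ht
      simp only [y', if_pos (show t < N by omega), if_pos (show t + 1 < N by omega)]
      rw [norm_sub_rev]
      congr 4 <;> omega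
    rwa [hnorm, hdiff] at h
  · intro t ht
    simp only [y'] at ht
    split_ifs at ht with htN
    · have := hy _ ht
      omega
    · exact absurd rfl ht

end Chain

section Grid

variable {E : Type*} [SeminormedAddCommGroup E]

def gridNormSq (A B : ℕ) (g : ℤ → ℤ → E) : ℝ :=
  ∑ a ∈ range A, ∑ b ∈ range B, ‖g a b‖ ^ 2

def gridDiffNormSq (R P : ℕ) (g : ℤ → ℤ → E) : ℝ :=
  ∑ r ∈ range R, ∑ p ∈ range P, ‖g r (p + 1) - g (r - 1) p‖ ^ 2

lemma gridNormSq_swap (A B : ℕ) (g : ℤ → ℤ → E) :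
    gridNormSq A B (Function.swap g) = gridNormSq B A g :=
  sum_comm

lemma sum_range_eq_sum_Ico_add {M : Type*} [AddCommMonoid M] (h : ℤ → M) {R R' B : ℕ}
    (hR : R ≤ R') (hh : ∀ c, h c ≠ 0 → 0 ≤ c ∧ c < R) {b : ℤ} (hb : 0 ≤ b)
    (hbB : b ≤ B) :
    ∑ a ∈ range R, h a = ∑ d ∈ Ico (-(B : ℤ)) R', h (d + b) := by
  rw [sum_Ico_add', show ∑ a ∈ range R, h a = ∑ c ∈ (range R).map Nat.castEmbedding, h c
    from (sum_map (range R) Nat.castEmbedding h).symm]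
  refine sum_subset (fun c hc => ?_) (fun c _ hc => ?_)
  · simp only [mem_map, mem_range, Nat.castEmbedding_apply] at hc
    obtain ⟨a, ha, rfl⟩ := hc
    simp only [mem_Ico]
    omega
  · by_contra hc'
    obtain ⟨hc₀, hcR⟩ := hh c hc'
    exact hc (mem_map.mpr ⟨c.toNat, mem_range.mpr (by omega), by simp [hc₀]⟩)

lemma gridNormSq_eq_sum_diag {A B : ℕ} (g : ℤ → ℤ → E)
    (hg : ∀ a b, g a b ≠ 0 → 0 ≤ a ∧ a < A) :
    gridNormSq A B g
      = ∑ d ∈ Ico (-(B : ℤ)) (A + 1), ∑ t ∈ range B, ‖g (d + t) t‖ ^ 2 := by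
  rw [gridNormSq, sum_comm, sum_comm (s := Ico _ _)]
  refine sum_congr rfl fun t ht => sum_range_eq_sum_Ico_add (fun c : ℤ => ‖g c t‖ ^ 2)
    (Nat.le_succ A) (fun c hc => hg c t fun h => hc (by simp [h])) (by positivity)
    (by simp at ht; omega)

lemma gridDiffNormSq_eq_sum_diag {A B : ℕ} (g : ℤ → ℤ → E)
    (hg : ∀ a b, g a b ≠ 0 → 0 ≤ a ∧ a < A) :
    gridDiffNormSq (A + 1) (B - 1) g = ∑ d ∈ Ico (-(B : ℤ)) (A + 1),
      ∑ t ∈ range (B - 1), ‖g (d + (t + 1 : ℕ)) (t + 1 : ℕ) - g (d + t) t‖ ^ 2 := by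
  rw [gridDiffNormSq, sum_comm, sum_comm (s := Ico _ _)]
  refine sum_congr rfl fun t ht => ?_
  rw [sum_range_eq_sum_Ico_add (fun c : ℤ => ‖g c (t + 1) - g (c - 1) t‖ ^ 2) le_rfl
    (fun c hc => ?_) (B := B) (b := t + 1) (by positivity) (by simp at ht; omega)]
  · refine sum_congr rfl fun d _ => ?_
    push_cast
    ring_nf
  · by_contra h
    have h₁ : g c (t + 1) = 0 := by_contra fun h' => h (by have := hg _ _ h'; omega)
    have h₂ : g (c - 1) t = 0 := by_contra fun h' => h (by have := hg _ _ h'; omega)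
    simp [h₁, h₂] at hc

/-- A diagonal `d` meets the strip `0 ≤ a < A` in at most `A < B` consecutive positions, so
inside `[0, B)` it vanishes just before (`d < 0`) or just after (`d ≥ 0`) them. -/
theorem gridNormSq_le {A B : ℕ} (hAB : A < B) (g : ℤ → ℤ → E)
    (hg : ∀ a b, g a b ≠ 0 → 0 ≤ a ∧ a < A) :
    (2 * sin (chainAngle (A + 1))) ^ 2 * gridNormSq A B g
      ≤ gridDiffNormSq (A + 1) (B - 1) g := by
  rw [gridNormSq_eq_sum_diag g hg, gridDiffNormSq_eq_sum_diag g hg, mul_sum]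
  refine sum_le_sum fun d _ => ?_
  rcases lt_or_ge d 0 with hd | hd
  · exact chain_le_of_support_Ico (fun t : ℕ => g (d + t) t) (s := (-d).toNat) (L := A)
      (by omega) (by omega) (fun t ht => by have := hg _ _ ht; omega) B
  · exact chain_le_of_support_lt (fun t : ℕ => g (d + t) t) (L := A - d.toNat) (by omega)
      (by omega) (fun t ht => by have := hg _ _ ht; omega)

end Grid

lemma sum_sq_cos_sub_cos_sub (θ : ℝ) (M : ℕ) :
    ∑ t ∈ range M, (cos ((2 * (t + 1 : ℕ) + 1) * θ) - cos ((2 * t + 1) * θ)) ^ 2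
      - (2 - 2 * cos (2 * θ)) * ∑ t ∈ range M, cos ((2 * t + 1) * θ) ^ 2
      = sin θ ^ 2 - sin θ * sin ((4 * M + 1) * θ) := by
  rw [mul_sum, ← sum_sub_distrib]
  have hstep (t : ℕ) : (cos ((2 * (t + 1 : ℕ) + 1) * θ) - cos ((2 * t + 1) * θ)) ^ 2
      - (2 - 2 * cos (2 * θ)) * cos ((2 * t + 1) * θ) ^ 2
      = -sin θ * sin ((4 * (t + 1 : ℕ) + 1) * θ) - -sin θ * sin ((4 * t + 1) * θ) := by
    set u := (2 * (t : ℝ) + 1) * θ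
    push_cast
    rw [show (2 * ((t : ℝ) + 1) + 1) * θ = u + 2 * θ by ring,
      show (4 * ((t : ℝ) + 1) + 1) * θ = 2 * u + (2 * θ + θ) by ring,
      show (4 * (t : ℝ) + 1) * θ = 2 * u - θ by ring]
    simp only [Real.sin_add, Real.cos_add, Real.sin_sub, Real.sin_two_mul, Real.cos_two_mul]
    linear_combination (4 * sin θ ^ 2 * cos θ ^ 2) * Real.sin_sq_add_cos_sq u
      + (4 * cos θ ^ 2 * cos u ^ 2 - 4 * sin u * cos u * sin θ * cos θ)
        * Real.sin_sq_add_cos_sq θ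
  rw [sum_congr rfl fun t _ => hstep t,
    sum_range_sub (fun t : ℕ => -sin θ * sin ((4 * t + 1) * θ))]
  simp
  ring

/-- The ground state `cos ((2t + 1)θ)` of the path, placed on the main diagonal; it vanishes at
`t = A` (`cos_mul_chainAngle_succ`). -/
def eigenGrid (F : Type*) [RCLike F] (A : ℕ) (a b : ℤ) : F :=
  if a = b ∧ 0 ≤ a ∧ a < A then (cos ((2 * a + 1) * chainAngle (A + 1)) : F) else 0

section Eigen

variable {A : ℕ}

lemma eigenGrid_support (a b : ℤ) (h : eigenGrid F A a b ≠ 0) : a = b ∧ 0 ≤ a ∧ a < A := by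
  by_contra h'
  exact h (if_neg h')

lemma eigenGrid_add_left {d : ℤ} (hd : d ≠ 0) (t : ℤ) : eigenGrid F A (d + t) t = 0 :=
  if_neg fun h => hd (by linarith [h.1])

lemma eigenGrid_diag {t : ℕ} (ht : t ≤ A) :
    eigenGrid F A t t = (cos ((2 * t + 1) * chainAngle (A + 1)) : F) := by
  rcases ht.lt_or_eq with ht | rfl
  · rw [eigenGrid, if_pos ⟨rfl, by positivity, by exact_mod_cast ht⟩]
    push_cast
    rfl
  · rw [eigenGrid, if_neg (by simp), cos_mul_chainAngle_succ, RCLike.ofReal_zero]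

lemma eigenGrid_diag_of_le {t : ℕ} (ht : A ≤ t) : eigenGrid F A t t = 0 :=
  if_neg fun h => by have := h.2.2; omega

lemma gridNormSq_eigenGrid {B : ℕ} (hAB : A ≤ B) :
    gridNormSq A B (eigenGrid F A)
      = ∑ t ∈ range A, cos ((2 * t + 1) * chainAngle (A + 1)) ^ 2 := by
  rw [gridNormSq_eq_sum_diag _ fun a b h => (eigenGrid_support a b h).2, sum_eq_single 0
    (fun d _ hd => sum_eq_zero fun t _ => by simp [eigenGrid_add_left hd])
    (fun h => absurd (mem_Ico.mpr ⟨by omega, by omega⟩) h)]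
  simp only [zero_add]
  rw [← sum_subset (range_subset_range.mpr hAB) fun t _ ht => by
    simp [eigenGrid_diag_of_le (F := F) (not_lt.mp (mem_range.not.mp ht))]]
  refine sum_congr rfl fun t ht => ?_
  rw [eigenGrid_diag (mem_range.mp ht).le, RCLike.norm_ofReal, sq_abs]

lemma gridNormSq_eigenGrid_pos (hA : 1 ≤ A) {B : ℕ} (hAB : A ≤ B) :
    0 < gridNormSq A B (eigenGrid F A) := by
  rw [gridNormSq_eigenGrid hAB]
  refine lt_of_lt_of_le ?_ (single_le_sum (fun t _ => sq_nonneg _) (mem_range.mpr hA))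
  have h := mul_chainAngle (m := A + 1) (by omega)
  have hθ := chainAngle_pos (m := A + 1) (by omega)
  have : (1 : ℝ) ≤ A := by exact_mod_cast hA
  push_cast at h ⊢
  have : 0 < cos ((2 * 0 + 1) * chainAngle (A + 1)) :=
    Real.cos_pos_of_mem_Ioo ⟨by nlinarith [Real.pi_pos], by nlinarith⟩
  positivity

theorem gridDiffNormSq_eigenGrid {B : ℕ} (hAB : A < B) :
    gridDiffNormSq (A + 1) (B - 1) (eigenGrid F A)
      = (2 * sin (chainAngle (A + 1))) ^ 2 * gridNormSq A B (eigenGrid F A) := by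
  set θ := chainAngle (A + 1)
  rw [gridNormSq_eigenGrid hAB.le,
    gridDiffNormSq_eq_sum_diag _ fun a b h => (eigenGrid_support a b h).2,
    sum_eq_single 0 (fun d _ hd => sum_eq_zero fun t _ => by simp [eigenGrid_add_left hd])
    (fun h => absurd (mem_Ico.mpr ⟨by omega, by omega⟩) h)]
  simp only [zero_add]
  rw [← sum_subset (range_subset_range.mpr (show A ≤ B - 1 by omega)) fun t _ ht => by
    have ht := not_lt.mp (mem_range.not.mp ht)
    rw [eigenGrid_diag_of_le ht, eigenGrid_diag_of_le (ht.trans t.le_succ), sub_zero, norm_zero,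
      sq, zero_mul]]
  have hsum : ∑ t ∈ range A, ‖eigenGrid F A (t + 1 : ℕ) (t + 1 : ℕ) - eigenGrid F A t t‖ ^ 2
      = ∑ t ∈ range A, (cos ((2 * (t + 1 : ℕ) + 1) * θ) - cos ((2 * t + 1) * θ)) ^ 2 := by
    refine sum_congr rfl fun t ht => ?_
    have ht := mem_range.mp ht
    rw [eigenGrid_diag ht, eigenGrid_diag ht.le, ← RCLike.ofReal_sub, RCLike.norm_ofReal, sq_abs]
  have hend : sin ((4 * A + 1) * θ) = sin θ := by
    have h := mul_chainAngle (m := A + 1) (by omega)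
    push_cast at h
    rw [show (4 * (A : ℝ) + 1) * θ = π - θ by linarith, Real.sin_pi_sub]
  have := sum_sq_cos_sub_cos_sub θ A
  rw [hend, two_sub_two_cos_two_mul] at this
  rw [hsum]
  linarith

end Eigen

section Convolution

variable {N M n : ℕ}

/-- The `i`-th coordinate slice of a block vector, extended by zero from the box to `ℤ × ℤ`;
the zeros outside the box account for the first and last block rows of `C_j(τ)`. -/
def blockGrid (v : Fin N × (Fin M × Fin n) → F) (i : Fin n) (a b : ℤ) : F :=
  if h : 0 ≤ a ∧ a < N ∧ 0 ≤ b ∧ b < M then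
    v (⟨a.toNat, by omega⟩, (⟨b.toNat, by omega⟩, i))
  else 0

lemma blockGrid_support (v : Fin N × (Fin M × Fin n) → F) (i : Fin n) (a b : ℤ)
    (h : blockGrid v i a b ≠ 0) : (0 ≤ a ∧ a < N) ∧ (0 ≤ b ∧ b < M) := by
  by_contra h'
  exact h (dif_neg fun h'' => h' ⟨⟨h''.1, h''.2.1⟩, h''.2.2⟩)

@[simp]
lemma blockGrid_coe (v : Fin N × (Fin M × Fin n) → F) (i : Fin n) (c : Fin N) (q : Fin M) :
    blockGrid v i (c : ℕ) (q : ℕ) = v (c, (q, i)) := by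
  rw [blockGrid, dif_pos (by omega)]
  simp

lemma blockGrid_of_support (g : ℤ → ℤ → F)
    (hg : ∀ a b, g a b ≠ 0 → (0 ≤ a ∧ a < N) ∧ (0 ≤ b ∧ b < M)) (i : Fin n) :
    blockGrid (fun x : Fin N × (Fin M × Fin n) => g x.1 x.2.1) i = g := by
  ext a b
  rw [blockGrid]
  split_ifs with h
  · simp [h.1, h.2.2.1]
  · by_contra h'
    have := hg a b (Ne.symm h')
    exact h (by omega)

lemma sum_indicator_mul_eq_blockGrid (v : Fin N × (Fin M × Fin n) → F) (i : Fin n) (a b : ℤ) :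
    ∑ x, (if (x.1 : ℤ) = a ∧ (x.2.1 : ℤ) = b ∧ x.2.2 = i then 1 else 0) * v x
      = blockGrid v i a b := by
  rw [blockGrid]
  split_ifs with h
  · rw [sum_eq_single (⟨a.toNat, by omega⟩, (⟨b.toNat, by omega⟩, i))]
    · simp [h.1, h.2.2.1]
    · rintro ⟨c, q, i'⟩ _ hx
      rw [if_neg, zero_mul]
      rintro ⟨hc, hq, rfl⟩
      simp only at hc hq
      exact hx (by ext <;> simp <;> omega)
    · simp
  · refine sum_eq_zero fun x _ => ?_
    rw [if_neg, zero_mul]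
    rintro ⟨hc, hq, -⟩
    exact h (by omega)

lemma vecNormSq_eq_sum_gridNormSq (v : Fin N × (Fin M × Fin n) → F) :
    vecNormSq v = ∑ i, gridNormSq N M (blockGrid v i) := by
  simp only [vecNormSq, gridNormSq, Fintype.sum_prod_type, ← Fin.sum_univ_eq_sum_range,
    blockGrid_coe]
  exact (sum_congr rfl fun _ _ => sum_comm).trans sum_comm

lemma vecNormSq_smul {ι : Type*} [Fintype ι] (c : F) (x : ι → F) :
    vecNormSq (c • x) = ‖c‖ ^ 2 * vecNormSq x := by
  simp only [vecNormSq, Pi.smul_apply, smul_eq_mul, norm_mul, mul_pow, mul_sum]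

lemma sInf_sqrt_vecNormSq_mulVec_eq {ι κ : Type*} [Fintype ι] [Fintype κ] (B : Matrix ι κ F)
    {a : ℝ} (ha : 0 ≤ a) (hle : ∀ x, a ^ 2 * vecNormSq x ≤ vecNormSq (B *ᵥ x))
    {x₀ : κ → F} (hx₀ : 0 < vecNormSq x₀) (heq : vecNormSq (B *ᵥ x₀) = a ^ 2 * vecNormSq x₀) :
    sInf {r : ℝ | ∃ x : κ → F, vecNormSq x = 1 ∧ r = Real.sqrt (vecNormSq (B *ᵥ x))}
      = a := by
  refine IsLeast.csInf_eq ⟨?_, ?_⟩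
  · set c : F := (((Real.sqrt (vecNormSq x₀))⁻¹ : ℝ) : F)
    have hc : ‖c‖ ^ 2 * vecNormSq x₀ = 1 := by
      rw [RCLike.norm_ofReal, sq_abs, inv_pow, Real.sq_sqrt hx₀.le, inv_mul_cancel₀ hx₀.ne']
    refine ⟨c • x₀, by rw [vecNormSq_smul, hc], ?_⟩
    rw [Matrix.mulVec_smul, vecNormSq_smul, heq, mul_left_comm, hc, mul_one, Real.sqrt_sq ha]
  · rintro r ⟨x, hx, rfl⟩
    have := hle x
    rw [hx, mul_one] at this
    exact Real.le_sqrt_of_sq_le this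

variable {K j : ℕ}

lemma convPencil_H_apply (u : Fin (j + 2) × (Fin (K - 1) × Fin n))
    (x : Fin (j + 1) × (Fin K × Fin n)) :
    convPencil (Hlam F K n) (Hconst F K n) j u x
      = (if (x.1 : ℤ) = u.1 ∧ (x.2.1 : ℤ) = u.2.1 + 1 ∧ x.2.2 = u.2.2 then 1 else 0)
        - (if (x.1 : ℤ) = u.1 - 1 ∧ (x.2.1 : ℤ) = u.2.1 ∧ x.2.2 = u.2.2 then 1 else 0) := by
  obtain ⟨r, p, i⟩ := u
  obtain ⟨c, q, i'⟩ := x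
  simp only [convPencil, Hlam, Hconst, Matrix.of_apply]
  split_ifs <;> first | omega | simp

lemma conjTranspose_convPencil_H_apply (x : Fin (j + 1) × (Fin K × Fin n))
    (u : Fin (j + 2) × (Fin (K - 1) × Fin n)) :
    (convPencil (Hlam F K n) (Hconst F K n) j)ᴴ x u
      = (if (u.1 : ℤ) = x.1 ∧ (u.2.1 : ℤ) = x.2.1 - 1 ∧ u.2.2 = x.2.2 then 1 else 0)
        - (if (u.1 : ℤ) = x.1 + 1 ∧ (u.2.1 : ℤ) = x.2.1 ∧ u.2.2 = x.2.2 then 1 else 0) := by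
  obtain ⟨r, p, i⟩ := u
  obtain ⟨c, q, i'⟩ := x
  simp only [Matrix.conjTranspose_apply, convPencil, Hlam, Hconst, Matrix.of_apply]
  split_ifs <;> first | omega | simp

lemma convPencil_H_mulVec (x : Fin (j + 1) × (Fin K × Fin n) → F) (r : Fin (j + 2))
    (p : Fin (K - 1)) (i : Fin n) :
    (convPencil (Hlam F K n) (Hconst F K n) j *ᵥ x) (r, (p, i))
      = blockGrid x i r (p + 1) - blockGrid x i (r - 1) p := by
  simp only [mulVec, dotProduct, convPencil_H_apply, sub_mul, sum_sub_distrib,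
    sum_indicator_mul_eq_blockGrid]

lemma conjTranspose_convPencil_H_mulVec (y : Fin (j + 2) × (Fin (K - 1) × Fin n) → F)
    (c : Fin (j + 1)) (q : Fin K) (i : Fin n) :
    ((convPencil (Hlam F K n) (Hconst F K n) j)ᴴ *ᵥ y) (c, (q, i))
      = blockGrid y i c (q - 1) - blockGrid y i (c + 1) q := by
  simp only [mulVec, dotProduct, conjTranspose_convPencil_H_apply, sub_mul, sum_sub_distrib,
    sum_indicator_mul_eq_blockGrid]

lemma vecNormSq_convPencil_H_mulVec (x : Fin (j + 1) × (Fin K × Fin n) → F) :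
    vecNormSq (convPencil (Hlam F K n) (Hconst F K n) j *ᵥ x)
      = ∑ i, gridDiffNormSq (j + 2) (K - 1) (blockGrid x i) := by
  simp only [vecNormSq, gridDiffNormSq, Fintype.sum_prod_type, ← Fin.sum_univ_eq_sum_range,
    convPencil_H_mulVec]
  exact (sum_congr rfl fun _ _ => sum_comm).trans sum_comm

lemma vecNormSq_conjTranspose_convPencil_H_mulVec
    (y : Fin (j + 2) × (Fin (K - 1) × Fin n) → F) :
    vecNormSq ((convPencil (Hlam F K n) (Hconst F K n) j)ᴴ *ᵥ y)
      = ∑ i, gridDiffNormSq K (j + 1) (Function.swap (blockGrid y i)) := by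
  simp only [vecNormSq, gridDiffNormSq, Fintype.sum_prod_type, ← Fin.sum_univ_eq_sum_range,
    conjTranspose_convPencil_H_mulVec, Function.swap]
  simp_rw [norm_sub_rev (blockGrid y _ (_ + 1) _)]
  exact ((sum_congr rfl fun _ _ => sum_comm).trans sum_comm).trans
    (sum_congr rfl fun _ _ => sum_comm)

theorem sigmaMin_convPencil_H_of_le (hjK : j + 2 ≤ K) (hn : 0 < n) :
    sigmaMin (convPencil (Hlam F K n) (Hconst F K n) j) = 2 * sin (chainAngle (j + 2)) := by
  have hcard : Fintype.card (Fin (j + 1) × (Fin K × Fin n))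
      ≤ Fintype.card (Fin (j + 2) × (Fin (K - 1) × Fin n)) := by
    obtain ⟨K, rfl⟩ := Nat.exists_eq_add_of_le' (show 1 ≤ K by omega)
    simp only [Fintype.card_prod, Fintype.card_fin, Nat.add_sub_cancel]
    nlinarith
  set x₀ : Fin (j + 1) × (Fin K × Fin n) → F := fun x => eigenGrid F (j + 1) x.1 x.2.1
  have hx₀ (i : Fin n) : blockGrid x₀ i = eigenGrid F (j + 1) :=
    blockGrid_of_support _ (fun a b h => by have := eigenGrid_support a b h; omega) i
  rw [sigmaMin, if_pos hcard]
  refine sInf_sqrt_vecNormSq_mulVec_eq _ (two_mul_sin_chainAngle_pos (by omega)).le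
    (fun x => ?_) (x₀ := x₀) ?_ ?_
  · rw [vecNormSq_eq_sum_gridNormSq, vecNormSq_convPencil_H_mulVec, mul_sum]
    exact sum_le_sum fun i _ =>
      gridNormSq_le (by omega) _ fun a b h => (blockGrid_support x i a b h).1
  · rw [vecNormSq_eq_sum_gridNormSq]
    simp only [hx₀, sum_const, card_univ, Fintype.card_fin, nsmul_eq_mul]
    exact mul_pos (by exact_mod_cast hn) (gridNormSq_eigenGrid_pos (by omega) (by omega))
  · rw [vecNormSq_convPencil_H_mulVec, vecNormSq_eq_sum_gridNormSq, mul_sum]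
    simp only [hx₀]
    exact sum_congr rfl fun _ _ => gridDiffNormSq_eigenGrid (by omega)

theorem sigmaMin_convPencil_H_of_ge (hK : 2 ≤ K) (hjK : K ≤ j + 1) (hn : 0 < n) :
    sigmaMin (convPencil (Hlam F K n) (Hconst F K n) j) = 2 * sin (chainAngle K) := by
  obtain ⟨A, rfl⟩ := Nat.exists_eq_add_of_le' (show 1 ≤ K by omega)
  have hcard : ¬ Fintype.card (Fin (j + 1) × (Fin (A + 1) × Fin n))
      ≤ Fintype.card (Fin (j + 2) × (Fin (A + 1 - 1) × Fin n)) := by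
    simp only [Fintype.card_prod, Fintype.card_fin, Nat.add_sub_cancel, not_le]
    nlinarith
  set y₀ : Fin (j + 2) × (Fin (A + 1 - 1) × Fin n) → F :=
    fun x => Function.swap (eigenGrid F A) x.1 x.2.1
  have hy₀ (i : Fin n) : Function.swap (blockGrid y₀ i) = eigenGrid F A := by
    rw [blockGrid_of_support _ (fun a b h => by have := eigenGrid_support b a h; omega) i]
  rw [sigmaMin, if_neg hcard]
  refine sInf_sqrt_vecNormSq_mulVec_eq _ (two_mul_sin_chainAngle_pos hK).le (fun y => ?_)
    (x₀ := y₀) ?_ ?_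
  · rw [vecNormSq_eq_sum_gridNormSq, vecNormSq_conjTranspose_convPencil_H_mulVec, mul_sum]
    refine sum_le_sum fun i _ => ?_
    rw [← gridNormSq_swap]
    exact gridNormSq_le (by omega) _ fun a b h => (blockGrid_support y i b a h).2
  · rw [vecNormSq_eq_sum_gridNormSq]
    simp only [← gridNormSq_swap _ _ (blockGrid y₀ _), hy₀, sum_const, card_univ,
      Fintype.card_fin, nsmul_eq_mul, Nat.add_sub_cancel]
    exact mul_pos (by exact_mod_cast hn) (gridNormSq_eigenGrid_pos (by omega) (by omega))
  · rw [vecNormSq_conjTranspose_convPencil_H_mulVec, vecNormSq_eq_sum_gridNormSq, mul_sum]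
    simp only [← gridNormSq_swap _ _ (blockGrid y₀ _), hy₀, Nat.add_sub_cancel]
    exact sum_congr rfl fun _ _ => gridDiffNormSq_eigenGrid (B := j + 2) (by omega)

end Convolution

/-- For `k ≥ 2`, `n ≥ 1` and `τ(λ) = H_{k−1}(λ) ⊗ I_n`, the smallest
singular values of the convolution matrices `C_{k−2}(τ)` and `C_{k−1}(τ)` are both equal
to `2 sin(π/(4k−2))`, which is at least `3/(2k)`. -/
theorem statement_17 {F : Type*} [RCLike F] {k n : ℕ} (hk : 2 ≤ k) (hn : 0 < n) :
    sigmaMin (convPencil (Hlam F k n) (Hconst F k n) (k - 2)) =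
        2 * Real.sin (Real.pi / (4 * (k : ℝ) - 2)) ∧
    sigmaMin (convPencil (Hlam F k n) (Hconst F k n) (k - 1)) =
        2 * Real.sin (Real.pi / (4 * (k : ℝ) - 2)) ∧
    3 / (2 * (k : ℝ)) ≤ 2 * Real.sin (Real.pi / (4 * (k : ℝ) - 2)) := by
  refine ⟨?_, sigmaMin_convPencil_H_of_ge hk (by omega) hn,
    three_div_le_two_mul_sin_chainAngle hk⟩
  rw [sigmaMin_convPencil_H_of_le (by omega) hn, Nat.sub_add_cancel hk]
  rfl

end GLin
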